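/- Let λ satisfy 0 < λ < 1 and let R̃ ≥ R ≥ 0. Then there exist real numbers a, b > R such that a > R̃ + λ·max(0, b − R) and b > R̃ + λ·max(0, a − R), provided R̃ is close enough to R; specifically, choosing a = b = s with s > (R̃ − λR)/(1 − λ) works whenever s > R. -/

import Mathlib

/- Take a = b = s: both conditions become s > R' + λ(s - R), i.e. (1 - λ)s > R' - λR, which
holds for all large s because λ < 1. -/

theorem add_mul_max_zero_sub_lt_self {l R R' s : ℝ} (hl : l < 1) (hRs : R ≤ s)
    (hs : (R' - l * R) / (1 - l) < s) : R' + l * max 0 (s - R) < s := by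
  rw [max_eq_right (sub_nonneg.mpr hRs)]
  have := (div_lt_iff₀ (sub_pos.mpr hl)).mp hs
  linarith

theorem csiszar_korner_ambiguous_general (l R R' : ℝ) (hl1 : l < 1) :
    ∃ a b : ℝ, a > R ∧ b > R ∧
      a > R' + l * max 0 (b - R) ∧ b > R' + l * max 0 (a - R) := by
  obtain ⟨s, hs⟩ := exists_gt (max R ((R' - l * R) / (1 - l)))
  obtain ⟨hRs, hs⟩ := max_lt_iff.mp hs
  have key := add_mul_max_zero_sub_lt_self hl1 hRs.le hs
  exact ⟨s, s, hRs, hRs, key, key⟩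

theorem csiszar_korner_ambiguous (l R R' : ℝ) (hl0 : 0 < l) (hl1 : l < 1)
    (hR : 0 ≤ R) (hRR' : R ≤ R') :
    ∃ a b : ℝ, a > R ∧ b > R ∧
      a > R' + l * max 0 (b - R) ∧ b > R' + l * max 0 (a - R) :=
  csiszar_korner_ambiguous_general l R R' hl1
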